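/- arXiv:2411.11737 — 3 statements merged into one kernel-verified Lean document; each statement's English description precedes it below -/
import Mathlib

section
/- Let ψ_{1i}, ψ_{0i} ∈ ℝ^p for i = 1,...,N be fixed vectors and r1 ∈ (0,1), r0 = 1−r1. Then the matrix r1^{-1}·Cov_N(ψ_{1i}) + r0^{-1}·Cov_N(ψ_{0i}) − Cov_N(ψ_{1i} − ψ_{0i}) equals Cov_N(√(r0/r1)·ψ_{1i} + √(r1/r0)·ψ_{0i}) and is therefore positive semidefinite. -/
/-- Finite population covariance matrix (divisor `N − 1`) of vectors `v 1, …, v N ∈ ℝ^p`. -/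
noncomputable def covN {N p : ℕ} (v : Fin N → Fin p → ℝ) : Matrix (Fin p) (Fin p) ℝ :=
  fun k l =>
    (∑ j, (v j k - (∑ i, v i k) / (N : ℝ)) * (v j l - (∑ i, v i l) / (N : ℝ)))
      / ((N : ℝ) - 1)

/-! Centring is linear, so `covN v = (N - 1)⁻¹ • CᵀC` with `C` the centred data matrix is a
quadratic form in the data. For `a * b = 1` one has
`(aX + bY)ᵀ(aX + bY) = (1 + a²) XᵀX + (1 + b²) YᵀY - (X - Y)ᵀ(X - Y)`, and `a = √(r0/r1)`,
`b = √(r1/r0)` give `1 + a² = r1⁻¹`, `1 + b² = r0⁻¹`. Positivity comes from the Gram form `CᵀC`. -/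

open Matrix

theorem Matrix.transpose_mul_self_smul_add_smul {R m n : Type*} [CommRing R] [Fintype m]
    {a b : R} (hab : a * b = 1) (X Y : Matrix m n R) :
    (a • X + b • Y)ᵀ * (a • X + b • Y)
      = (1 + a ^ 2) • (Xᵀ * X) + (1 + b ^ 2) • (Yᵀ * Y) - (X - Y)ᵀ * (X - Y) := by
  simp only [transpose_add, transpose_sub, transpose_smul, Matrix.add_mul, Matrix.mul_add,
    Matrix.sub_mul, Matrix.mul_sub, Matrix.smul_mul, Matrix.mul_smul]
  linear_combination (norm := module) hab • (Xᵀ * Y + Yᵀ * X : Matrix n n R)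

noncomputable def centered {N p : ℕ} : (Fin N → Fin p → ℝ) →ₗ[ℝ] Matrix (Fin N) (Fin p) ℝ where
  toFun v := of fun j k => v j k - (∑ i, v i k) / N
  map_add' v w := by
    ext j k
    simp only [of_apply, Matrix.add_apply, Pi.add_apply, Finset.sum_add_distrib]
    ring
  map_smul' c v := by
    ext j k
    simp only [of_apply, Matrix.smul_apply, Pi.smul_apply, smul_eq_mul, RingHom.id_apply,
      ← Finset.mul_sum]
    ring

theorem centered_apply {N p : ℕ} (v : Fin N → Fin p → ℝ) (j : Fin N) (k : Fin p) :
    centered v j k = v j k - (∑ i, v i k) / N :=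
  rfl

theorem covN_eq_smul_transpose_mul_self {N p : ℕ} (v : Fin N → Fin p → ℝ) :
    covN v = ((N : ℝ) - 1)⁻¹ • ((centered v)ᵀ * centered v) := by
  ext k l
  simp only [covN, Matrix.smul_apply, mul_apply, transpose_apply, centered_apply, smul_eq_mul]
  rw [div_eq_inv_mul]

theorem covN_posSemidef {N p : ℕ} (v : Fin N → Fin p → ℝ) : (covN v).PosSemidef := by
  -- for `N = 0` the divisor `N - 1` is negative, but the sums are empty
  rcases N with _ | n
  · have : covN v = 0 := by ext k l; simp [covN]
    exact this ▸ PosSemidef.zero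
  · rw [covN_eq_smul_transpose_mul_self, ← conjTranspose_eq_transpose_of_trivial]
    refine (posSemidef_conjTranspose_mul_self _).smul (inv_nonneg.mpr ?_)
    push_cast
    linarith [n.cast_nonneg (α := ℝ)]

theorem covN_smul_add_smul {N p : ℕ} {a b : ℝ} (hab : a * b = 1) (v w : Fin N → Fin p → ℝ) :
    covN (fun i => a • v i + b • w i)
      = (1 + a ^ 2) • covN v + (1 + b ^ 2) • covN w - covN (fun i => v i - w i) := by
  change covN (a • v + b • w) = _ + _ - covN (v - w)
  simp only [covN_eq_smul_transpose_mul_self, map_add, map_sub, map_smul,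
    transpose_mul_self_smul_add_smul hab, smul_sub, smul_add]
  rw [smul_comm (1 + a ^ 2), smul_comm (1 + b ^ 2)]

theorem conservative_covariance_identity_general (N p : ℕ)
    (ψ1 ψ0 : Fin N → Fin p → ℝ) (r1 : ℝ) (hr0 : 0 < r1) (hr1 : r1 < 1) :
    (r1⁻¹ • covN ψ1 + (1 - r1)⁻¹ • covN ψ0 - covN (fun i => ψ1 i - ψ0 i)
        = covN (fun i =>
            Real.sqrt ((1 - r1) / r1) • ψ1 i + Real.sqrt (r1 / (1 - r1)) • ψ0 i))
    ∧ (r1⁻¹ • covN ψ1 + (1 - r1)⁻¹ • covN ψ0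
        - covN (fun i => ψ1 i - ψ0 i)).PosSemidef := by
  have hr0' : 0 < 1 - r1 := sub_pos.mpr hr1
  have hab : √((1 - r1) / r1) * √(r1 / (1 - r1)) = 1 := by
    rw [← inv_div (1 - r1) r1, Real.sqrt_inv,
      mul_inv_cancel₀ (Real.sqrt_pos.mpr (by positivity)).ne']
  have key := covN_smul_add_smul hab ψ1 ψ0
  rw [Real.sq_sqrt (by positivity), Real.sq_sqrt (by positivity)] at key
  have h1 : 1 + (1 - r1) / r1 = r1⁻¹ := by field_simp; ring
  have h0 : 1 + r1 / (1 - r1) = (1 - r1)⁻¹ := by field_simp; ring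
  rw [h1, h0] at key
  exact ⟨key.symm, key ▸ covN_posSemidef _⟩

/-- Let `ψ1 i, ψ0 i ∈ ℝ^p` be fixed vectors and `r1 ∈ (0,1)`, `r0 = 1 − r1`.  Then
`r1⁻¹ Cov_N(ψ1) + r0⁻¹ Cov_N(ψ0) − Cov_N(ψ1 − ψ0)` equals
`Cov_N(√(r0/r1)·ψ1 + √(r1/r0)·ψ0)` and is therefore positive semidefinite. -/
theorem conservative_covariance_identity (N p : ℕ) (hN : 2 ≤ N)
    (ψ1 ψ0 : Fin N → Fin p → ℝ) (r1 : ℝ) (hr0 : 0 < r1) (hr1 : r1 < 1) :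
    (r1⁻¹ • covN ψ1 + (1 - r1)⁻¹ • covN ψ0 - covN (fun i => ψ1 i - ψ0 i)
        = covN (fun i =>
            Real.sqrt ((1 - r1) / r1) • ψ1 i + Real.sqrt (r1 / (1 - r1)) • ψ0 i))
    ∧ (r1⁻¹ • covN ψ1 + (1 - r1)⁻¹ • covN ψ0
        - covN (fun i => ψ1 i - ψ0 i)).PosSemidef :=
  conservative_covariance_identity_general N p ψ1 ψ0 r1 hr0 hr1
end

section
/- Under the same linear-combination condition on the estimating functions (existence of q_1, q_0 with q_z^⊤ψ_z = y − h_z and q_z^⊤ψ_{1−z} = 0), if θ_N is a root of the finite population estimating equation Ψ_N(θ) = r1·E_N[ψ_1(Y_i(1),X_i;θ)] + r0·E_N[ψ_0(Y_i(0),X_i;θ)] = 0, then the average imputed potential outcomes match the true averages: E_N[h_z(X_i;θ_N)] = Ȳ(z) for z = 0, 1. -/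
open Matrix

lemma dot_sum {p N : ℕ} (q : Fin p → ℝ) (f : Fin N → Fin p → ℝ) :
    q ⬝ᵥ (∑ i, f i) = ∑ i, q ⬝ᵥ f i := by
  simp only [dotProduct, Finset.sum_apply, Finset.mul_sum]
  rw [Finset.sum_comm]

/-- Under the linear-combination condition (existence of `q1, q0` with
`qzᵀψz = y − hz` and `qzᵀψ_{1−z} = 0`), if `θ_N` is a root of the finite population
estimating equation `Ψ_N(θ) = r1·E_N[ψ1(Yᵢ(1),Xᵢ;θ)] + r0·E_N[ψ0(Yᵢ(0),Xᵢ;θ)] = 0`,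
then the average imputed potential outcomes match the true averages:
`E_N[hz(Xᵢ;θ_N)] = Ȳ(z)` for `z = 0, 1`. -/
theorem imputed_means_match {𝒳 Θ' : Type*} (p N : ℕ) (hN : 0 < N)
    (ψ1 ψ0 : ℝ → 𝒳 → Θ' → (Fin p → ℝ)) (h1 h0 : 𝒳 → Θ' → ℝ)
    (q1 q0 : Θ' → (Fin p → ℝ))
    (hcond : ∀ (y : ℝ) (x : 𝒳) (θ : Θ'),
      q1 θ ⬝ᵥ ψ1 y x θ = y - h1 x θ ∧ q1 θ ⬝ᵥ ψ0 y x θ = 0 ∧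
      q0 θ ⬝ᵥ ψ0 y x θ = y - h0 x θ ∧ q0 θ ⬝ᵥ ψ1 y x θ = 0)
    (Y1 Y0 : Fin N → ℝ) (X : Fin N → 𝒳) (θN : Θ')
    (r1 r0 : ℝ) (hr1 : 0 < r1) (hr0 : 0 < r0) (hsum : r1 + r0 = 1)
    (hroot : r1 • ((N : ℝ)⁻¹ • ∑ i, ψ1 (Y1 i) (X i) θN)
        + r0 • ((N : ℝ)⁻¹ • ∑ i, ψ0 (Y0 i) (X i) θN) = 0) :
    (∑ i, h1 (X i) θN) / (N : ℝ) = (∑ i, Y1 i) / (N : ℝ)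
    ∧ (∑ i, h0 (X i) θN) / (N : ℝ) = (∑ i, Y0 i) / (N : ℝ) := by
  have hNne : (N : ℝ) ≠ 0 := Nat.cast_ne_zero.mpr hN.ne'
  have key : ∀ (q : Θ' → Fin p → ℝ),
      q θN ⬝ᵥ (r1 • ((N : ℝ)⁻¹ • ∑ i, ψ1 (Y1 i) (X i) θN)
        + r0 • ((N : ℝ)⁻¹ • ∑ i, ψ0 (Y0 i) (X i) θN)) = 0 := by
    intro q; rw [hroot, dotProduct_zero]
  have h1eq := key q1
  have h0eq := key q0
  rw [dotProduct_add, dotProduct_smul, dotProduct_smul, dotProduct_smul,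
    dotProduct_smul, dot_sum, dot_sum] at h1eq h0eq
  simp only [(hcond _ _ _).1, (hcond _ _ _).2.1, (hcond _ _ _).2.2.1,
    (hcond _ _ _).2.2.2, Finset.sum_const_zero, smul_zero, add_zero, zero_add,
    smul_eq_mul, Finset.sum_sub_distrib] at h1eq h0eq
  simp only [mul_zero, add_zero, zero_add] at h1eq h0eq
  constructor
  · have : (∑ i, Y1 i) - (∑ i, h1 (X i) θN) = 0 := by
      have := mul_eq_zero.mp h1eq
      rcases this with h | h
      · exact absurd h hr1.ne'
      · have := mul_eq_zero.mp h
        rcases this with h' | h'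
        · exact absurd h' (inv_ne_zero hNne)
        · exact h'
    field_simp
    linarith
  · have : (∑ i, Y0 i) - (∑ i, h0 (X i) θN) = 0 := by
      have := mul_eq_zero.mp h0eq
      rcases this with h | h
      · exact absurd h hr0.ne'
      · have := mul_eq_zero.mp h
        rcases this with h' | h'
        · exact absurd h' (inv_ne_zero hNne)
        · exact h'
    field_simp
    linarith
end

section
/- Under the linear-combination condition (Condition 7) and assuming θ̂ solves the empirical estimating equation, the model-imputed estimator and the model-assisted estimator coincide exactly: g(E_N[h_1(X_i;θ̂)]) − g(E_N[h_0(X_i;θ̂)]) = g(E_N^1[Y_i(θ̂)]) − g(E_N^0[Y_i(θ̂)]), where Y_i(θ) = Y_i − h_{Z_i}(X_i;θ) + E_N[h_{Z_i}(X_i;θ)] is the observed adjusted outcome. -/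
open Matrix

/- After the arm sizes cancel, the estimating equation reads `∑_T ψ₁ + ∑_C ψ₀ = 0`.
Dotting it with `q₁(θ̂)` turns it, by Condition 7, into
`∑_{i ∈ T} (Yᵢ − h₁(Xᵢ; θ̂)) = 0`: the treated-arm residuals have mean zero, so adding the
constant `E_N[h₁(X; θ̂)]` to them gives a treated-arm mean equal to that constant. Likewise for
the control arm with `q₀(θ̂)`, and the two estimators agree term by term, whatever `g` is. -/

theorem add_eq_zero_of_smul_smul_add_smul_smul_eq_zero {K V : Type*} [Field K] [AddCommGroup V]
    [Module K V] {a b n : K} (ha : a ≠ 0) (hb : b ≠ 0) (hn : n ≠ 0) {u v : V}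
    (h : (a / n) • (a⁻¹ • u) + (b / n) • (b⁻¹ • v) = 0) : u + v = 0 := by
  have hcoef : ∀ x : K, x ≠ 0 → x / n * x⁻¹ = n⁻¹ := fun x hx => by
    rw [div_eq_mul_inv, mul_right_comm, mul_inv_cancel₀ hx, one_mul]
  rw [smul_smul, smul_smul, hcoef a ha, hcoef b hb, ← smul_add] at h
  exact (smul_eq_zero.mp h).resolve_left (inv_ne_zero hn)

theorem sum_eq_zero_of_dotProduct_eq_of_sum_add_sum_eq_zero {ι m R : Type*} [Fintype m]
    [CommSemiring R] (q : m → R) {s t : Finset ι} {f g : ι → m → R} {r : ι → R}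
    (hf : ∀ i ∈ s, q ⬝ᵥ f i = r i) (hg : ∀ i ∈ t, q ⬝ᵥ g i = 0)
    (h : ∑ i ∈ s, f i + ∑ i ∈ t, g i = 0) : ∑ i ∈ s, r i = 0 :=
  calc ∑ i ∈ s, r i = q ⬝ᵥ (∑ i ∈ s, f i + ∑ i ∈ t, g i) := by
        rw [dotProduct_add, dotProduct_sum, dotProduct_sum, Finset.sum_congr rfl hf,
          Finset.sum_eq_zero hg, add_zero]
    _ = 0 := by rw [h, dotProduct_zero]

theorem sum_add_const_div_card_of_sum_eq_zero {ι K : Type*} [Field K] [CharZero K]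
    {s : Finset ι} (hs : 0 < s.card) {r : ι → K} (hr : ∑ i ∈ s, r i = 0) (c : K) :
    (∑ i ∈ s, (r i + c)) / s.card = c := by
  rw [Finset.sum_add_distrib, hr, zero_add, Finset.sum_const, nsmul_eq_mul,
    mul_div_cancel_left₀ c (Nat.cast_ne_zero.mpr hs.ne')]

theorem model_imputed_eq_model_assisted_general {𝒳 Θ' : Type*} (p N : ℕ) (hN : 0 < N)
    (ψ1 ψ0 : ℝ → 𝒳 → Θ' → (Fin p → ℝ)) (h1 h0 : 𝒳 → Θ' → ℝ)
    (q1 q0 : Θ' → (Fin p → ℝ)) (g : ℝ → ℝ)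
    (hcond : ∀ (y : ℝ) (x : 𝒳) (θ : Θ'),
      q1 θ ⬝ᵥ ψ1 y x θ = y - h1 x θ ∧ q1 θ ⬝ᵥ ψ0 y x θ = 0 ∧
      q0 θ ⬝ᵥ ψ0 y x θ = y - h0 x θ ∧ q0 θ ⬝ᵥ ψ1 y x θ = 0)
    (Y : Fin N → ℝ) (X : Fin N → 𝒳) (θhat : Θ')
    (T : Finset (Fin N)) (C : Finset (Fin N))
    (hn1 : 0 < T.card) (hn0 : 0 < C.card)
    (heq : ((T.card : ℝ) / (N : ℝ)) • ((T.card : ℝ)⁻¹ • ∑ i ∈ T, ψ1 (Y i) (X i) θhat)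
        + ((C.card : ℝ) / (N : ℝ)) • ((C.card : ℝ)⁻¹ • ∑ i ∈ C, ψ0 (Y i) (X i) θhat)
        = 0) :
    g ((∑ i, h1 (X i) θhat) / (N : ℝ)) - g ((∑ i, h0 (X i) θhat) / (N : ℝ))
    = g ((∑ i ∈ T,
            (Y i - h1 (X i) θhat + (∑ j, h1 (X j) θhat) / (N : ℝ))) / (T.card : ℝ))
      - g ((∑ i ∈ C,
            (Y i - h0 (X i) θhat + (∑ j, h0 (X j) θhat) / (N : ℝ))) / (C.card : ℝ)) := by
  have hψ : ∑ i ∈ T, ψ1 (Y i) (X i) θhat + ∑ i ∈ C, ψ0 (Y i) (X i) θhat = 0 :=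
    add_eq_zero_of_smul_smul_add_smul_smul_eq_zero (Nat.cast_ne_zero.mpr hn1.ne')
      (Nat.cast_ne_zero.mpr hn0.ne') (Nat.cast_ne_zero.mpr hN.ne') heq
  have hres1 : ∑ i ∈ T, (Y i - h1 (X i) θhat) = 0 :=
    sum_eq_zero_of_dotProduct_eq_of_sum_add_sum_eq_zero (q1 θhat)
      (fun i _ => (hcond (Y i) (X i) θhat).1) (fun i _ => (hcond (Y i) (X i) θhat).2.1) hψ
  have hres0 : ∑ i ∈ C, (Y i - h0 (X i) θhat) = 0 :=
    sum_eq_zero_of_dotProduct_eq_of_sum_add_sum_eq_zero (q0 θhat)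
      (fun i _ => (hcond (Y i) (X i) θhat).2.2.1) (fun i _ => (hcond (Y i) (X i) θhat).2.2.2)
      ((add_comm _ _).trans hψ)
  rw [sum_add_const_div_card_of_sum_eq_zero hn1 hres1,
    sum_add_const_div_card_of_sum_eq_zero hn0 hres0]

/-- Under the linear-combination condition (Condition 7) and assuming `θ̂` solves the empirical
estimating equation, the model-imputed and model-assisted estimators coincide exactly:
`g(E_N[h1(Xᵢ;θ̂)]) − g(E_N[h0(Xᵢ;θ̂)]) = g(E_N^1[Yᵢ(θ̂)]) − g(E_N^0[Yᵢ(θ̂)])`, where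
`Yᵢ(θ) = Yᵢ − h_{Zᵢ}(Xᵢ;θ) + E_N[h_{Zᵢ}(X;θ)]` is the observed adjusted outcome. -/
theorem model_imputed_eq_model_assisted {𝒳 Θ' : Type*} (p N : ℕ) (hN : 0 < N)
    (ψ1 ψ0 : ℝ → 𝒳 → Θ' → (Fin p → ℝ)) (h1 h0 : 𝒳 → Θ' → ℝ)
    (q1 q0 : Θ' → (Fin p → ℝ)) (g : ℝ → ℝ)
    (hcond : ∀ (y : ℝ) (x : 𝒳) (θ : Θ'),
      q1 θ ⬝ᵥ ψ1 y x θ = y - h1 x θ ∧ q1 θ ⬝ᵥ ψ0 y x θ = 0 ∧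
      q0 θ ⬝ᵥ ψ0 y x θ = y - h0 x θ ∧ q0 θ ⬝ᵥ ψ1 y x θ = 0)
    (Z : Fin N → Bool) (Y : Fin N → ℝ) (X : Fin N → 𝒳) (θhat : Θ')
    (T : Finset (Fin N)) (C : Finset (Fin N))
    (hT : T = Finset.univ.filter fun i => Z i = true)
    (hC : C = Finset.univ.filter fun i => Z i = false)
    (hn1 : 0 < T.card) (hn0 : 0 < C.card)
    (heq : ((T.card : ℝ) / (N : ℝ)) • ((T.card : ℝ)⁻¹ • ∑ i ∈ T, ψ1 (Y i) (X i) θhat)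
        + ((C.card : ℝ) / (N : ℝ)) • ((C.card : ℝ)⁻¹ • ∑ i ∈ C, ψ0 (Y i) (X i) θhat)
        = 0) :
    g ((∑ i, h1 (X i) θhat) / (N : ℝ)) - g ((∑ i, h0 (X i) θhat) / (N : ℝ))
    = g ((∑ i ∈ T,
            (Y i - h1 (X i) θhat + (∑ j, h1 (X j) θhat) / (N : ℝ))) / (T.card : ℝ))
      - g ((∑ i ∈ C,
            (Y i - h0 (X i) θhat + (∑ j, h0 (X j) θhat) / (N : ℝ))) / (C.card : ℝ)) :=
  model_imputed_eq_model_assisted_general p N hN ψ1 ψ0 h1 h0 q1 q0 g hcond Y X θhat T C hn1 hn0 heq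
end
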